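/- For every M ∈ Mat(n, ℍ[[t]]), the constant term of the Study determinant Sdet_t(M) is equal to 0 if and only if M is not invertible in Mat(n, ℍ[[t]]). -/

import Mathlib

open Quaternion PowerSeries

noncomputable section

/-- The simplex part of a quaternion: `x = x^S + j x^P` with `x^S, x^P ∈ ℂ`. -/
def qS (x : ℍ[ℝ]) : ℂ := ⟨x.re, x.imI⟩

/-- The perplex part of a quaternion. -/
def qP (x : ℍ[ℝ]) : ℂ := ⟨x.imJ, -x.imK⟩

/-- The embedding of `ℂ` into the quaternions as the real subalgebra spanned by `1, i`. -/
def cq : ℂ →+* ℍ[ℝ] where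
  toFun c := ⟨c.re, c.im, 0, 0⟩
  map_one' := by ext <;> simp
  map_mul' a b := by
    change (⟨(a*b).re, (a*b).im, 0, 0⟩ : ℍ[ℝ]) = (⟨a.re, a.im, 0, 0⟩ : ℍ[ℝ]) * ⟨b.re, b.im, 0, 0⟩
    ext <;> simp <;> ring
  map_zero' := by ext <;> simp
  map_add' a b := by
    change (⟨(a+b).re, (a+b).im, 0, 0⟩ : ℍ[ℝ]) = (⟨a.re, a.im, 0, 0⟩ : ℍ[ℝ]) + ⟨b.re, b.im, 0, 0⟩
    ext <;> simp

/-- Coefficientwise quaternion conjugation of a formal power series. -/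
def pStar (α : PowerSeries ℍ[ℝ]) : PowerSeries ℍ[ℝ] :=
  PowerSeries.mk fun k => star (PowerSeries.coeff k α)

/-- Coefficientwise simplex part of a quaternionic power series. -/
def pS (α : PowerSeries ℍ[ℝ]) : PowerSeries ℂ :=
  PowerSeries.mk fun k => qS (PowerSeries.coeff k α)

/-- Coefficientwise perplex part of a quaternionic power series. -/
def pP (α : PowerSeries ℍ[ℝ]) : PowerSeries ℂ :=
  PowerSeries.mk fun k => qP (PowerSeries.coeff k α)

/-- Coefficientwise complex conjugation of a complex power series. -/
def pConj (β : PowerSeries ℂ) : PowerSeries ℂ := PowerSeries.map (starRingEnd ℂ) β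

/-- `ψ_t(M) = [[M^S, −conj(M^P)], [M^P, conj(M^S)]]`. -/
def psiT {ι κ : Type*} (M : Matrix ι κ (PowerSeries ℍ[ℝ])) :
    Matrix (ι ⊕ ι) (κ ⊕ κ) (PowerSeries ℂ) :=
  Matrix.fromBlocks (M.map pS) (-(M.map fun a => pConj (pP a)))
    (M.map pP) (M.map fun a => pConj (pS a))

/-- The Study determinant `Sdet_t(M) = det(ψ_t(M))`. -/
def SdetT {ι : Type*} [Fintype ι] [DecidableEq ι] (M : Matrix ι ι (PowerSeries ℍ[ℝ])) :
    PowerSeries ℂ :=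
  (psiT M).det

set_option linter.unusedSectionVars false

lemma qS_add (x y : ℍ[ℝ]) : qS (x + y) = qS x + qS y := by
  simp [qS, Complex.ext_iff]
lemma qP_add (x y : ℍ[ℝ]) : qP (x + y) = qP x + qP y := by
  simp [qP, Complex.ext_iff]; ring
lemma qS_mul (x y : ℍ[ℝ]) : qS (x * y) = qS x * qS y - (starRingEnd ℂ) (qP x) * qP y := by
  simp [qS, qP, Complex.ext_iff, Quaternion.re_mul, Quaternion.imI_mul, Complex.mul_re,
    Complex.mul_im]; constructor <;> ring
lemma qP_mul (x y : ℍ[ℝ]) : qP (x * y) = (starRingEnd ℂ) (qS x) * qP y + qP x * qS y := by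
  simp [qS, qP, Complex.ext_iff, Quaternion.imJ_mul, Quaternion.imK_mul, Complex.mul_re,
    Complex.mul_im]; constructor <;> ring
lemma qS_one : qS 1 = 1 := by simp [qS, Complex.ext_iff]
lemma qP_one : qP 1 = 0 := by simp [qP, Complex.ext_iff]
lemma qS_zero : qS 0 = 0 := by simp [qS, Complex.ext_iff]
lemma qP_zero : qP 0 = 0 := by simp [qP, Complex.ext_iff]
def qRec (a c : ℂ) : ℍ[ℝ] := ⟨a.re, a.im, c.re, -c.im⟩
lemma qS_qRec (a c : ℂ) : qS (qRec a c) = a := by simp [qS, qRec, Complex.ext_iff]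
lemma qP_qRec (a c : ℂ) : qP (qRec a c) = c := by simp [qP, qRec, Complex.ext_iff]
lemma q_ext {x y : ℍ[ℝ]} (h1 : qS x = qS y) (h2 : qP x = qP y) : x = y := by
  simp [qS, qP, Complex.ext_iff] at h1 h2
  ext <;> simp [h1.1, h1.2, h2.1, h2.2]


@[simp] lemma coeff_pS (k : ℕ) (α : PowerSeries ℍ[ℝ]) :
    PowerSeries.coeff k (pS α) = qS (PowerSeries.coeff k α) := by simp [pS]
@[simp] lemma coeff_pP (k : ℕ) (α : PowerSeries ℍ[ℝ]) :
    PowerSeries.coeff k (pP α) = qP (PowerSeries.coeff k α) := by simp [pP]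
@[simp] lemma coeff_pConj (k : ℕ) (β : PowerSeries ℂ) :
    PowerSeries.coeff k (pConj β) = (starRingEnd ℂ) (PowerSeries.coeff k β) := by
  simp [pConj]

lemma pS_add (x y : PowerSeries ℍ[ℝ]) : pS (x + y) = pS x + pS y := by
  ext k; simp [qS_add]
lemma pP_add (x y : PowerSeries ℍ[ℝ]) : pP (x + y) = pP x + pP y := by
  ext k; simp [qP_add]
lemma pS_one : pS 1 = 1 := by
  ext k; by_cases h : k = 0 <;> simp [h, PowerSeries.coeff_one, qS_one, qS_zero]

lemma pP_one : pP 1 = 0 := by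
  ext k; by_cases h : k = 0 <;> simp [h, PowerSeries.coeff_one, qP_one, qP_zero]
lemma pS_zero : pS 0 = 0 := by ext k; simp [qS_zero]
lemma pP_zero : pP 0 = 0 := by ext k; simp [qP_zero]

lemma pS_mul (x y : PowerSeries ℍ[ℝ]) :
    pS (x * y) = pS x * pS y - pConj (pP x) * pP y := by
  ext k
  simp only [coeff_pS, PowerSeries.coeff_mul, map_sub, ← Finset.sum_sub_distrib,
    coeff_pConj, coeff_pP]
  rw [show qS (∑ p ∈ Finset.HasAntidiagonal.antidiagonal k, (PowerSeries.coeff p.1) x * (PowerSeries.coeff p.2) y)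
      = ∑ p ∈ Finset.HasAntidiagonal.antidiagonal k, qS ((PowerSeries.coeff p.1) x * (PowerSeries.coeff p.2) y)
    from map_sum (AddMonoidHom.mk' qS qS_add) _ _]
  exact Finset.sum_congr rfl fun p _ => qS_mul _ _
lemma pP_mul (x y : PowerSeries ℍ[ℝ]) :
    pP (x * y) = pConj (pS x) * pP y + pP x * pS y := by
  ext k
  simp only [coeff_pP, PowerSeries.coeff_mul, map_add, coeff_pConj, coeff_pS]
  rw [show qP (∑ p ∈ Finset.HasAntidiagonal.antidiagonal k, (PowerSeries.coeff p.1) x * (PowerSeries.coeff p.2) y)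
      = ∑ p ∈ Finset.HasAntidiagonal.antidiagonal k, qP ((PowerSeries.coeff p.1) x * (PowerSeries.coeff p.2) y)
    from map_sum (AddMonoidHom.mk' qP qP_add) _ _, ← Finset.sum_add_distrib]
  exact Finset.sum_congr rfl fun p _ => qP_mul _ _

def pRec (a c : PowerSeries ℂ) : PowerSeries ℍ[ℝ] :=
  PowerSeries.mk fun k => qRec (PowerSeries.coeff k a) (PowerSeries.coeff k c)
@[simp] lemma pS_pRec (a c : PowerSeries ℂ) : pS (pRec a c) = a := by
  ext k; simp [pRec, qS_qRec]
@[simp] lemma pP_pRec (a c : PowerSeries ℂ) : pP (pRec a c) = c := by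
  ext k; simp [pRec, qP_qRec]
lemma p_ext {x y : PowerSeries ℍ[ℝ]} (h1 : pS x = pS y) (h2 : pP x = pP y) : x = y := by
  apply PowerSeries.ext; intro k
  have h1' := congrArg (PowerSeries.coeff k) h1
  have h2' := congrArg (PowerSeries.coeff k) h2
  simp only [coeff_pS, coeff_pP] at h1' h2'
  exact q_ext h1' h2'

lemma pS_sum {γ : Type*} (s : Finset γ) (f : γ → PowerSeries ℍ[ℝ]) :
    pS (∑ i ∈ s, f i) = ∑ i ∈ s, pS (f i) :=
  map_sum (AddMonoidHom.mk' pS pS_add) _ _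
lemma pP_sum {γ : Type*} (s : Finset γ) (f : γ → PowerSeries ℍ[ℝ]) :
    pP (∑ i ∈ s, f i) = ∑ i ∈ s, pP (f i) :=
  map_sum (AddMonoidHom.mk' pP pP_add) _ _
lemma pConj_mul (a b : PowerSeries ℂ) : pConj (a * b) = pConj a * pConj b := map_mul _ a b
lemma pConj_add (a b : PowerSeries ℂ) : pConj (a + b) = pConj a + pConj b := map_add _ a b
lemma pConj_sub (a b : PowerSeries ℂ) : pConj (a - b) = pConj a - pConj b := map_sub _ a b
lemma pConj_neg (a : PowerSeries ℂ) : pConj (-a) = -pConj a := map_neg _ a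
lemma pConj_sum {γ : Type*} (s : Finset γ) (f : γ → PowerSeries ℂ) :
    pConj (∑ i ∈ s, f i) = ∑ i ∈ s, pConj (f i) := map_sum (PowerSeries.map (starRingEnd ℂ)) _ _
lemma pConj_pConj (a : PowerSeries ℂ) : pConj (pConj a) = a := by
  ext k; simp


section MatrixLevel
variable {ι : Type*} [Fintype ι] [DecidableEq ι]

lemma psiT_one : psiT (1 : Matrix ι ι (PowerSeries ℍ[ℝ])) = 1 := by
  have h1 : (1 : Matrix ι ι (PowerSeries ℍ[ℝ])).map pS = 1 :=
    Matrix.map_one pS pS_zero pS_one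
  have h2 : (1 : Matrix ι ι (PowerSeries ℍ[ℝ])).map (fun a => pConj (pP a)) = 0 := by
    ext i j
    by_cases h : i = j <;>
      simp [Matrix.map_apply, Matrix.one_apply, h, pP_one, pP_zero, pConj]
  have h3 : (1 : Matrix ι ι (PowerSeries ℍ[ℝ])).map (fun a => pConj (pS a)) = 1 := by
    ext i j
    by_cases h : i = j <;>
      simp [Matrix.map_apply, Matrix.one_apply, h, pS_one, pS_zero, pConj]
  have h4 : (1 : Matrix ι ι (PowerSeries ℍ[ℝ])).map pP = 0 := by
    ext i j
    by_cases h : i = j <;>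
      simp [Matrix.map_apply, Matrix.one_apply, h, pP_one, pP_zero]
  rw [psiT, h1, h2, h3, h4, neg_zero, Matrix.fromBlocks_one]

lemma psiT_mul (M N : Matrix ι ι (PowerSeries ℍ[ℝ])) :
    psiT (M * N) = psiT M * psiT N := by
  rw [psiT, psiT, psiT, Matrix.fromBlocks_multiply]
  have e11 : (M * N).map pS =
      M.map pS * N.map pS + (-(M.map fun a => pConj (pP a))) * N.map pP := by
    refine Matrix.ext fun i j => ?_
    simp only [Matrix.map_apply, Matrix.mul_apply, Matrix.add_apply, Matrix.neg_apply,
      pS_sum, pS_mul, ← Finset.sum_add_distrib]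
    exact Finset.sum_congr rfl fun p _ => by ring
  have e12 : -((M * N).map fun a => pConj (pP a)) =
      M.map pS * (-(N.map fun a => pConj (pP a))) +
        (-(M.map fun a => pConj (pP a))) * (N.map fun a => pConj (pS a)) := by
    refine Matrix.ext fun i j => ?_
    simp only [Matrix.map_apply, Matrix.mul_apply, Matrix.add_apply, Matrix.neg_apply,
      pP_sum, pP_mul, pConj_sum, pConj_add, pConj_mul, pConj_pConj,
      ← Finset.sum_neg_distrib, ← Finset.sum_add_distrib]
    exact Finset.sum_congr rfl fun p _ => by ring
  have e21 : (M * N).map pP =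
      M.map pP * N.map pS + (M.map fun a => pConj (pS a)) * N.map pP := by
    refine Matrix.ext fun i j => ?_
    simp only [Matrix.map_apply, Matrix.mul_apply, Matrix.add_apply,
      pP_sum, pP_mul, ← Finset.sum_add_distrib]
    exact Finset.sum_congr rfl fun p _ => by ring
  have e22 : ((M * N).map fun a => pConj (pS a)) =
      M.map pP * (-(N.map fun a => pConj (pP a))) +
        (M.map fun a => pConj (pS a)) * (N.map fun a => pConj (pS a)) := by
    refine Matrix.ext fun i j => ?_
    simp only [Matrix.map_apply, Matrix.mul_apply, Matrix.add_apply, Matrix.neg_apply,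
      pS_sum, pS_mul, pConj_sum, pConj_sub, pConj_mul, pConj_pConj,
      ← Finset.sum_add_distrib]
    exact Finset.sum_congr rfl fun p _ => by ring
  rw [e11, e12, e21, e22]

lemma psiT_inj {M N : Matrix ι ι (PowerSeries ℍ[ℝ])} (h : psiT M = psiT N) : M = N := by
  have hS := congrArg Matrix.toBlocks₁₁ h
  have hP := congrArg Matrix.toBlocks₂₁ h
  simp only [psiT, Matrix.toBlocks_fromBlocks₁₁, Matrix.toBlocks_fromBlocks₂₁] at hS hP
  refine Matrix.ext fun i j => ?_
  exact p_ext (congrFun (congrFun hS i) j) (congrFun (congrFun hP i) j)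

end MatrixLevel

section Sigma
variable {ι : Type*} [Fintype ι] [DecidableEq ι]

def Jm : Matrix (ι ⊕ ι) (ι ⊕ ι) (PowerSeries ℂ) := Matrix.fromBlocks 0 (-1) 1 0

def sigmaM (X : Matrix (ι ⊕ ι) (ι ⊕ ι) (PowerSeries ℂ)) :
    Matrix (ι ⊕ ι) (ι ⊕ ι) (PowerSeries ℂ) :=
  -(Jm * X.map (PowerSeries.map (starRingEnd ℂ)) * Jm)

lemma Jm_mul_Jm : (Jm : Matrix (ι ⊕ ι) (ι ⊕ ι) (PowerSeries ℂ)) * Jm = -1 := by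
  rw [Jm, Matrix.fromBlocks_multiply, ← Matrix.fromBlocks_one, Matrix.fromBlocks_neg]
  simp

lemma sigmaM_blocks (A B C D : Matrix ι ι (PowerSeries ℂ)) :
    sigmaM (Matrix.fromBlocks A B C D) =
      Matrix.fromBlocks (D.map pConj) (-(C.map pConj)) (-(B.map pConj)) (A.map pConj) := by
  rw [sigmaM, Jm, Matrix.fromBlocks_map, Matrix.fromBlocks_multiply, Matrix.fromBlocks_multiply]
  simp only [Matrix.zero_mul, Matrix.one_mul, Matrix.mul_zero, Matrix.mul_one,
    Matrix.neg_mul, Matrix.mul_neg, zero_add, add_zero, neg_neg, neg_zero]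
  rw [Matrix.fromBlocks_neg]
  simp only [neg_neg]
  rfl

lemma sigmaM_mul (X Y : Matrix (ι ⊕ ι) (ι ⊕ ι) (PowerSeries ℂ)) :
    sigmaM (X * Y) = sigmaM X * sigmaM Y := by
  rw [sigmaM, sigmaM, sigmaM, Matrix.map_mul]
  have : Jm * X.map (PowerSeries.map (starRingEnd ℂ)) * Jm *
      (Jm * Y.map (PowerSeries.map (starRingEnd ℂ)) * Jm) =
      Jm * X.map (PowerSeries.map (starRingEnd ℂ)) * (Jm * Jm) *
        (Y.map (PowerSeries.map (starRingEnd ℂ)) * Jm) := by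
    noncomm_ring
  rw [neg_mul_neg, this, Jm_mul_Jm]
  noncomm_ring

lemma sigmaM_one : sigmaM (1 : Matrix (ι ⊕ ι) (ι ⊕ ι) (PowerSeries ℂ)) = 1 := by
  have : (1 : Matrix (ι ⊕ ι) (ι ⊕ ι) (PowerSeries ℂ)).map (PowerSeries.map (starRingEnd ℂ)) = 1 :=
    Matrix.map_one _ (map_zero _) (map_one _)
  rw [sigmaM, this, Matrix.mul_one, Jm_mul_Jm, neg_neg]

lemma sigmaM_psiT (M : Matrix ι ι (PowerSeries ℍ[ℝ])) : sigmaM (psiT M) = psiT M := by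
  have c1 : ((M.map fun a => pConj (pS a)).map pConj) = M.map pS := by
    refine Matrix.ext fun i j => ?_
    simp [Matrix.map_apply, pConj_pConj]
  have c2 : ((M.map pP).map pConj) = M.map fun a => pConj (pP a) := by
    refine Matrix.ext fun i j => ?_
    simp [Matrix.map_apply]
  have c3 : ((-(M.map fun a => pConj (pP a))).map pConj) = -(M.map pP) := by
    refine Matrix.ext fun i j => ?_
    simp [Matrix.map_apply, Matrix.neg_apply, pConj_neg, pConj_pConj]
  have c4 : ((M.map pS).map pConj) = M.map fun a => pConj (pS a) := by
    refine Matrix.ext fun i j => ?_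
    simp [Matrix.map_apply]
  rw [psiT, sigmaM_blocks, c1, c2, c3, c4, neg_neg]

lemma isUnit_psiT_iff (M : Matrix ι ι (PowerSeries ℍ[ℝ])) :
    IsUnit (psiT M) ↔ IsUnit M := by
  constructor
  · rintro ⟨u, hu⟩
    set Y : Matrix (ι ⊕ ι) (ι ⊕ ι) (PowerSeries ℂ) := u⁻¹.val with hY
    have hy1 : psiT M * Y = 1 := by rw [← hu]; exact u.mul_inv
    have hy2 : Y * psiT M = 1 := by rw [← hu]; exact u.inv_mul
    have hfix : sigmaM Y = Y := by
      have h1 : sigmaM Y * psiT M = 1 := by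
        rw [← sigmaM_psiT M, ← sigmaM_mul, hy2, sigmaM_one]
      calc sigmaM Y = sigmaM Y * (psiT M * Y) := by rw [hy1, mul_one]
        _ = (sigmaM Y * psiT M) * Y := by rw [mul_assoc]
        _ = Y := by rw [h1, one_mul]
    set A := Y.toBlocks₁₁ with hA
    set B := Y.toBlocks₁₂ with hB
    set C := Y.toBlocks₂₁ with hC
    set D := Y.toBlocks₂₂ with hD
    have hYb : Y = Matrix.fromBlocks A B C D := (Matrix.fromBlocks_toBlocks Y).symm
    rw [hYb, sigmaM_blocks] at hfix
    have h12 : -(C.map pConj) = B := by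
      have := congrArg Matrix.toBlocks₁₂ hfix
      simpa using this
    have h22 : A.map pConj = D := by
      have := congrArg Matrix.toBlocks₂₂ hfix
      simpa using this
    set N : Matrix ι ι (PowerSeries ℍ[ℝ]) := Matrix.of fun i j => pRec (A i j) (C i j) with hN
    have hpsiN : psiT N = Y := by
      rw [psiT, hYb]
      have m1 : N.map pS = A := by ext i j; simp [hN, Matrix.map_apply]
      have m2 : N.map pP = C := by ext i j; simp [hN, Matrix.map_apply]
      have m3 : (N.map fun a => pConj (pP a)) = C.map pConj := by
        ext i j; simp [hN, Matrix.map_apply]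
      have m4 : (N.map fun a => pConj (pS a)) = A.map pConj := by
        ext i j; simp [hN, Matrix.map_apply]
      rw [m1, m2, m3, m4, h12, h22]
    have hmn : M * N = 1 := by
      apply psiT_inj
      rw [psiT_mul, hpsiN, hy1, psiT_one]
    have hnm : N * M = 1 := by
      apply psiT_inj
      rw [psiT_mul, hpsiN, hy2, psiT_one]
    exact ⟨⟨M, N, hmn, hnm⟩, rfl⟩
  · rintro ⟨u, hu⟩
    refine ⟨⟨psiT M, psiT u⁻¹.val, ?_, ?_⟩, rfl⟩
    · rw [← psiT_mul, ← hu, Units.mul_inv, psiT_one]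
    · rw [← psiT_mul, ← hu, Units.inv_mul, psiT_one]

end Sigma

/-- Proposition 4.8 (ii): the constant term of the Study determinant
vanishes iff the matrix is not invertible in `Mat(n, ℍ[[t]])`. -/
theorem SdetT_constantCoeff_eq_zero_iff {n : ℕ}
    (M : Matrix (Fin n) (Fin n) (PowerSeries ℍ[ℝ])) :
    PowerSeries.constantCoeff (SdetT M) = 0 ↔ ¬ IsUnit M := by
  rw [show SdetT M = (psiT M).det from rfl, ← isUnit_psiT_iff, Matrix.isUnit_iff_isUnit_det,
    PowerSeries.isUnit_iff_constantCoeff, isUnit_iff_ne_zero, not_not]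

end
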